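/- Let (g_n) be a divergent sequence in PGL(d,ℝ). Then there exist a subsequence (h_n) of (g_n) and nonzero linear subspaces E_+, E_− ⊆ ℝ^d with dim E_+ + dim E_− = d such that for every compact set K ⊆ ℝP^{d−1} − P(E_−) and every open neighborhood U of P(E_+) in ℝP^{d−1}, we have h_n·K ⊆ U for all sufficiently large n (i.e., the sets h_n·K converge to a subset of P(E_+)). -/

import Mathlib

open scoped LinearAlgebra.Projectivization Pointwise
open Projectivization Filter Topology Set Module

noncomputable section

namespace ConvexProjective

/-- `ℝ^d`. -/
abbrev Vd (d : ℕ) : Type := Fin d → ℝ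

/-- Real projective space `ℝP^{d-1}`. -/
abbrev PSpace (d : ℕ) : Type := ℙ ℝ (Vd d)

/-- `GL(d, ℝ)`. -/
abbrev GLd (d : ℕ) : Type := Matrix.GeneralLinearGroup (Fin d) ℝ

/-- `PGL(d, ℝ)`, the quotient of `GL(d,ℝ)` by its center. -/
abbrev PGLd (d : ℕ) : Type := GLd d ⧸ Subgroup.center (GLd d)

variable {d : ℕ}

/-- The quotient topology on projective space. -/
instance instTopProjectivization {K V : Type*} [DivisionRing K] [AddCommGroup V] [Module K V]
    [TopologicalSpace V] : TopologicalSpace (ℙ K V) :=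
  inferInstanceAs (TopologicalSpace (Quotient (projectivizationSetoid K V)))

/-- The linear automorphism of `ℝ^d` attached to an element of `GL(d,ℝ)`. -/
def glEquiv (g : GLd d) : Vd d ≃ₗ[ℝ] Vd d :=
  LinearMap.GeneralLinearGroup.generalLinearEquiv ℝ (Vd d)
    (Matrix.GeneralLinearGroup.toLin g)

lemma glEquiv_apply (g : GLd d) (v : Vd d) :
    glEquiv g v = Matrix.mulVec (g : Matrix (Fin d) (Fin d) ℝ) v := rfl

lemma glEquiv_mul (g h : GLd d) (v : Vd d) :
    glEquiv (g * h) v = glEquiv g (glEquiv h v) := by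
  simp [glEquiv_apply, Matrix.mulVec_mulVec]

lemma glEquiv_one (v : Vd d) : glEquiv (1 : GLd d) v = v := by
  simp [glEquiv]

/-- The projective transformation attached to an element of `GL(d,ℝ)`. -/
def projMap (g : GLd d) : PSpace d → PSpace d :=
  Projectivization.map (glEquiv g).toLinearMap (glEquiv g).injective

lemma projMap_mk (g : GLd d) (v : Vd d) (hv : v ≠ 0) :
    projMap g (Projectivization.mk ℝ v hv)
      = Projectivization.mk ℝ (glEquiv g v) ((glEquiv g).map_ne_zero_iff.mpr hv) := by
  exact Projectivization.map_mk _ _ v hv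

lemma projMap_mul (g h : GLd d) (x : PSpace d) :
    projMap (g * h) x = projMap g (projMap h x) := by
  induction x using Projectivization.ind with
  | h v hv => simp [projMap_mk, glEquiv_mul]

lemma projMap_one (x : PSpace d) : projMap (1 : GLd d) x = x := by
  induction x using Projectivization.ind with
  | h v hv =>
      rw [projMap_mk, Projectivization.mk_eq_mk_iff']
      exact ⟨1, by simp [glEquiv_one]⟩

/-- The action of `GL(d,ℝ)` on projective space, as a homomorphism to permutations. -/
def projPermHom (d : ℕ) : GLd d →* Equiv.Perm (PSpace d) where
  toFun g :=
    { toFun := projMap g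
      invFun := projMap g⁻¹
      left_inv := fun x => by rw [← projMap_mul, inv_mul_cancel, projMap_one]
      right_inv := fun x => by rw [← projMap_mul, mul_inv_cancel, projMap_one] }
  map_one' := by ext x; simp [projMap_one]
  map_mul' g h := by ext x; simp [projMap_mul]

lemma center_le_ker_projPermHom (d : ℕ) :
    Subgroup.center (GLd d) ≤ (projPermHom d).ker := by
  intro z hz
  have hcomm : ∀ t : Matrix.TransvectionStruct (Fin d) ℝ,
      Commute t.toMatrix (z : Matrix (Fin d) (Fin d) ℝ) := by
    intro t
    have ht : IsUnit (Matrix.det t.toMatrix) := by simp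
    have hu := Subgroup.mem_center_iff.mp hz (Matrix.GeneralLinearGroup.mk'' t.toMatrix ht)
    have hval : ((Matrix.GeneralLinearGroup.mk'' t.toMatrix ht : GLd d) : Matrix (Fin d) (Fin d) ℝ)
        = t.toMatrix := rfl
    have h2 := congrArg (Units.val) hu
    rw [Units.val_mul, Units.val_mul, hval] at h2
    exact h2
  obtain ⟨r, hr⟩ := Matrix.mem_range_scalar_of_commute_transvectionStruct hcomm
  rw [MonoidHom.mem_ker]
  ext x
  induction x using Projectivization.ind with
  | h v hv =>
      show projMap z (Projectivization.mk ℝ v hv) = Projectivization.mk ℝ v hv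
      rw [projMap_mk, Projectivization.mk_eq_mk_iff']
      refine ⟨r, ?_⟩
      have : glEquiv z v = Matrix.mulVec (z : Matrix (Fin d) (Fin d) ℝ) v := rfl
      rw [this, ← hr]
      ext i
      simp [Matrix.scalar_apply, Matrix.mulVec_diagonal, mul_comm]

/-- The action of `PGL(d,ℝ)` on projective space. -/
def pglPermHom (d : ℕ) : PGLd d →* Equiv.Perm (PSpace d) :=
  QuotientGroup.lift _ (projPermHom d) (center_le_ker_projPermHom d)

instance : MulAction (PGLd d) (PSpace d) :=
  MulAction.compHom _ (pglPermHom d)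

/-- `P(C) ⊆ ℝP^{d-1}`: projectivization of a set of nonzero vectors. -/
def projC (C : Set (Vd d)) : Set (PSpace d) :=
  {p | ∃ v : Vd d, ∃ h : v ≠ 0, v ∈ C ∧ p = Projectivization.mk ℝ v h}

/-- `C` is a nonempty open convex cone with `C ∩ (−C) = ∅`. -/
def IsPCone (C : Set (Vd d)) : Prop :=
  IsOpen C ∧ Convex ℝ C ∧ C.Nonempty ∧
    (∀ v ∈ C, ∀ r : ℝ, 0 < r → r • v ∈ C) ∧ C ∩ (-C) = ∅

/-- `P(E)` for a linear subspace `E ⊆ ℝ^d`. -/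
def projSub (E : Submodule ℝ (Vd d)) : Set (PSpace d) :=
  {p | ∃ v : Vd d, ∃ h : v ≠ 0, v ∈ E ∧ p = Projectivization.mk ℝ v h}

/-- The automorphism group of `Ω` inside `PGL(d,ℝ)`. -/
def aut (Ω : Set (PSpace d)) : Subgroup (PGLd d) := MulAction.stabilizer (PGLd d) Ω

/-- The full orbital limit set `Λ_Ω(Γ)`: points of `∂Ω` that are accumulation points
of an orbit `Γ ⬝ x` for some `x ∈ Ω`. -/
def limitSet (Ω : Set (PSpace d)) (Γ : Subgroup (PGLd d)) : Set (PSpace d) :=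
  {y | y ∈ frontier Ω ∧ ∃ x ∈ Ω, y ∈ closure {z : PSpace d | ∃ g ∈ Γ, z = g • x}}

/-- Nonzero lifts, lying in the closure of the cone `C`, of a set of projective points. -/
def lifts (C : Set (Vd d)) (A : Set (PSpace d)) : Set (Vd d) :=
  {v | ∃ h : v ≠ 0, v ∈ closure C ∧ Projectivization.mk ℝ v h ∈ A}

/-- `Hull_Ω(A)`: the intersection with `Ω` of the projective convex hull of `A`. -/
def hullIn (C : Set (Vd d)) (A : Set (PSpace d)) : Set (PSpace d) :=
  projC C ∩ {p | ∃ v : Vd d, ∃ h : v ≠ 0, v ∈ convexHull ℝ (lifts C A) ∧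
    p = Projectivization.mk ℝ v h}

/-- `Cor_Ω(Γ) = Hull_Ω(Λ_Ω(Γ))`. -/
def core (C : Set (Vd d)) (Γ : Subgroup (PGLd d)) : Set (PSpace d) :=
  hullIn C (limitSet (projC C) Γ)

/-- The open projective segment `(x,y)`, relative to the cone `C`
(lifts are taken in the closure of `C`). -/
def projSeg (C : Set (Vd d)) (x y : PSpace d) : Set (PSpace d) :=
  {p | ∃ v w u : Vd d, ∃ hv : v ≠ 0, ∃ hw : w ≠ 0, ∃ hu : u ≠ 0,
    v ∈ closure C ∧ w ∈ closure C ∧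
    Projectivization.mk ℝ v hv = x ∧ Projectivization.mk ℝ w hw = y ∧
    u ∈ openSegment ℝ v w ∧ p = Projectivization.mk ℝ u hu}

/-- The open face `F_Ω(x)`: `x` together with all `y ∈ ∂Ω` such that the open
segment `(x,y)` lies in `∂Ω`. -/
def face (C : Set (Vd d)) (x : PSpace d) : Set (PSpace d) :=
  {x} ∪ {y | y ∈ frontier (projC C) ∧ projSeg C x y ⊆ frontier (projC C)}

/-- `x` is an extreme point of `Ω = P(C)`. -/
def IsExtremePt (C : Set (Vd d)) (x : PSpace d) : Prop := face C x = {x}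

/-- `Λ` contains all of its faces. -/
def ContainsFaces (C : Set (Vd d)) (Λ : Set (PSpace d)) : Prop :=
  ∀ x ∈ Λ, face C x ⊆ Λ

/-- `Λ ⊆ ∂Ω` is boundary-convex. -/
def BoundaryConvex (C : Set (Vd d)) (Λ : Set (PSpace d)) : Prop :=
  ∀ x ∈ Λ, ∀ y ∈ Λ, projSeg C x y ⊆ frontier (projC C) → projSeg C x y ⊆ Λ

/-- `Γ` acts cocompactly on `S`. -/
def ActsCocompactlyOn (Γ : Subgroup (PGLd d)) (S : Set (PSpace d)) : Prop :=
  ∃ K : Set (PSpace d), IsCompact K ∧ K ⊆ S ∧ ∀ x ∈ S, ∃ g ∈ Γ, g • x ∈ K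

/-- `Γ` acts convex cocompactly on `Ω = P(C)`: it is a discrete subgroup of `Aut(Ω)`,
its convex core is nonempty, and it acts cocompactly on its convex core. -/
def ConvexCocompact (C : Set (Vd d)) (Γ : Subgroup (PGLd d)) : Prop :=
  Γ ≤ aut (projC C) ∧ DiscreteTopology Γ ∧ (core C Γ).Nonempty ∧
    ActsCocompactlyOn Γ (core C Γ)

/-- A divergent sequence in `PGL(d,ℝ)`: one that leaves every compact set. -/
def IsDivergent (g : ℕ → PGLd d) : Prop :=
  ∀ K : Set (PGLd d), IsCompact K → {n | g n ∈ K}.Finite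

/-- `E₊`, `E₋` are (nontrivial) attracting and repelling subspaces for the sequence `g`:
for every compact `K ⊆ ℝP^{d-1} − P(E₋)` and every open neighborhood `U` of `P(E₊)`,
`g n • K ⊆ U` for all sufficiently large `n`. -/
def AttractingRepelling (g : ℕ → PGLd d) (Ep Em : Submodule ℝ (Vd d)) : Prop :=
  Ep ≠ ⊥ ∧ Em ≠ ⊥ ∧
  ∀ K : Set (PSpace d), IsCompact K → K ⊆ (projSub Em)ᶜ →
    ∀ U : Set (PSpace d), IsOpen U → projSub Ep ⊆ U →
      ∀ᶠ n in Filter.atTop, ∀ x ∈ K, g n • x ∈ U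

/-- `P(E)` is a supporting subspace of `Ω`. -/
def IsSupportingSubspace (Ω : Set (PSpace d)) (E : Submodule ℝ (Vd d)) : Prop :=
  projSub E ∩ Ω = ∅ ∧ (projSub E ∩ closure Ω).Nonempty

/-- `Λ` is invariant under `Γ`. -/
def InvariantUnder (Γ : Subgroup (PGLd d)) (Λ : Set (PSpace d)) : Prop :=
  ∀ g ∈ Γ, ∀ x ∈ Λ, g • x ∈ Λ

/-! ### The collapsed quotient `[Λ]` -/

/-- The relation on `Λ` collapsing each `Λ_Ω(H)`, `H ∈ 𝓗`, to a point. -/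
def collapseRel (C : Set (Vd d)) (𝓗 : Set (Subgroup (PGLd d))) (Λ : Set (PSpace d)) :
    ↥Λ → ↥Λ → Prop := fun x y =>
  x = y ∨ ∃ H ∈ 𝓗, (x : PSpace d) ∈ limitSet (projC C) H ∧
    (y : PSpace d) ∈ limitSet (projC C) H

/-- The quotient `[Λ]` of `Λ` collapsing each `Λ_Ω(H)`, `H ∈ 𝓗`, to a point,
with the quotient topology. -/
abbrev Collapse (C : Set (Vd d)) (𝓗 : Set (Subgroup (PGLd d))) (Λ : Set (PSpace d)) : Type :=
  Quot (collapseRel C 𝓗 Λ)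

/-- The quotient map `π : Λ → [Λ]`. -/
abbrev cmk (C : Set (Vd d)) (𝓗 : Set (Subgroup (PGLd d))) (Λ : Set (PSpace d))
    (x : ↥Λ) : Collapse C 𝓗 Λ :=
  Quot.mk (collapseRel C 𝓗 Λ) x

/-- `p ∈ [Λ]` is the point `[Λ_Ω(H)]`. -/
def IsClassOf (C : Set (Vd d)) (𝓗 : Set (Subgroup (PGLd d))) (Λ : Set (PSpace d))
    (H : Subgroup (PGLd d)) (p : Collapse C 𝓗 Λ) : Prop :=
  ∃ x : ↥Λ, (x : PSpace d) ∈ limitSet (projC C) H ∧ p = cmk C 𝓗 Λ x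

variable {Γ : Subgroup (PGLd d)} {Λ : Set (PSpace d)}

/-- The action of `Γ` on `Λ`, given invariance of `Λ`. -/
def lsmul (hinv : InvariantUnder Γ Λ) (g : Γ) (x : ↥Λ) : ↥Λ :=
  ⟨(g : PGLd d) • (x : PSpace d), hinv g g.2 x x.2⟩

variable (C : Set (Vd d)) (𝓗 : Set (Subgroup (PGLd d)))

/-- The induced `Γ`-action on `[Λ]` is a convergence group action. -/
def QuotConvergenceAction (hinv : InvariantUnder Γ Λ) : Prop :=
  ∀ γ : ℕ → Γ, Function.Injective γ →
    ∃ a b : Collapse C 𝓗 Λ, ∃ φ : ℕ → ℕ, StrictMono φ ∧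
      ∀ K : Set (Collapse C 𝓗 Λ), IsCompact K → a ∉ K →
        ∀ U ∈ 𝓝 b, ∀ᶠ n in Filter.atTop,
          ∀ x : ↥Λ, cmk C 𝓗 Λ x ∈ K → cmk C 𝓗 Λ (lsmul hinv (γ (φ n)) x) ∈ U

/-- `p ∈ [Λ]` is a conical limit point for the induced `Γ`-action on `[Λ]`. -/
def QuotConicalLimitPt (hinv : InvariantUnder Γ Λ) (p : Collapse C 𝓗 Λ) : Prop :=
  ∃ a b : Collapse C 𝓗 Λ, a ≠ b ∧ ∃ γ : ℕ → Γ,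
    (∀ x : ↥Λ, cmk C 𝓗 Λ x = p →
      Filter.Tendsto (fun n => cmk C 𝓗 Λ (lsmul hinv (γ n) x)) Filter.atTop (𝓝 a)) ∧
    (∀ y : ↥Λ, cmk C 𝓗 Λ y ≠ p →
      Filter.Tendsto (fun n => cmk C 𝓗 Λ (lsmul hinv (γ n) y)) Filter.atTop (𝓝 b))

/-- `g ∈ Γ` fixes the point `p ∈ [Λ]`. -/
def QuotFixes (hinv : InvariantUnder Γ Λ) (g : Γ) (p : Collapse C 𝓗 Λ) : Prop :=
  ∀ x : ↥Λ, cmk C 𝓗 Λ x = p → cmk C 𝓗 Λ (lsmul hinv g x) = p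

/-- `p ∈ [Λ]` is a parabolic point: its stabilizer in `Γ` is infinite (it fixes `p`),
and every infinite-order element of the stabilizer has exactly one fixed point in `[Λ]`. -/
def QuotParabolicPt (hinv : InvariantUnder Γ Λ) (p : Collapse C 𝓗 Λ) : Prop :=
  {g : Γ | QuotFixes C 𝓗 hinv g p}.Infinite ∧
    ∀ g : Γ, QuotFixes C 𝓗 hinv g p → ¬ IsOfFinOrder g →
      ∃! q : Collapse C 𝓗 Λ, QuotFixes C 𝓗 hinv g q

/-- `p ∈ [Λ]` is a bounded parabolic point: it is parabolic and its stabilizer acts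
cocompactly on `[Λ] − {p}`. -/
def QuotBoundedParabolicPt (hinv : InvariantUnder Γ Λ) (p : Collapse C 𝓗 Λ) : Prop :=
  QuotParabolicPt C 𝓗 hinv p ∧
    ∃ K : Set (Collapse C 𝓗 Λ), IsCompact K ∧ p ∉ K ∧
      ∀ q : Collapse C 𝓗 Λ, q ≠ p → ∃ g : Γ, QuotFixes C 𝓗 hinv g p ∧
        ∃ x : ↥Λ, cmk C 𝓗 Λ x = q ∧ cmk C 𝓗 Λ (lsmul hinv g x) ∈ K

/-! ### Abstract convergence group actions and relative hyperbolicity -/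

section Abstract

variable (G : Type*) [Group G] (X : Type*) [TopologicalSpace X] [MulAction G X]

/-- `G` acts on `X` as a convergence group: every sequence of distinct elements has a
subsequence converging, away from a point `a`, to a constant `b`, uniformly on compacta. -/
def IsConvergenceAction : Prop :=
  ∀ γ : ℕ → G, Function.Injective γ →
    ∃ a b : X, ∃ φ : ℕ → ℕ, StrictMono φ ∧
      ∀ K : Set X, IsCompact K → a ∉ K →
        ∀ U ∈ 𝓝 b, ∀ᶠ n in Filter.atTop, ∀ x ∈ K, γ (φ n) • x ∈ U

/-- `x` is a conical limit point for the `G`-action on `X`. -/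
def IsConicalLimitPoint (x : X) : Prop :=
  ∃ a b : X, a ≠ b ∧ ∃ γ : ℕ → G,
    Filter.Tendsto (fun n => γ n • x) Filter.atTop (𝓝 a) ∧
    ∀ y : X, y ≠ x → Filter.Tendsto (fun n => γ n • y) Filter.atTop (𝓝 b)

/-- `H` is a parabolic subgroup for the `G`-action on `X`: `H` is infinite, fixes a point
of `X`, and every infinite-order element of `H` has exactly one fixed point in `X`. -/
def IsParabolicSubgroup (H : Subgroup G) : Prop :=
  (H : Set G).Infinite ∧ (∃ x : X, ∀ h ∈ H, h • x = x) ∧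
    ∀ h ∈ H, ¬ IsOfFinOrder h → ∃! x : X, h • x = x

/-- `x ∈ X` is a parabolic point: its stabilizer is a parabolic subgroup. -/
def IsParabolicPoint (x : X) : Prop :=
  IsParabolicSubgroup G X (MulAction.stabilizer G x)

/-- `x ∈ X` is a bounded parabolic point: it is parabolic and its stabilizer acts
cocompactly on `X − {x}`. -/
def IsBoundedParabolicPoint (x : X) : Prop :=
  IsParabolicPoint G X x ∧
    ∃ K : Set X, IsCompact K ∧ x ∉ K ∧
      ∀ y : X, y ≠ x → ∃ g ∈ MulAction.stabilizer G x, g • y ∈ K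

end Abstract

/-- A group is non-elementary if it is neither finite nor virtually cyclic. -/
def IsNonElementary (G : Type*) [Group G] : Prop :=
  ¬ Finite G ∧ ¬ ∃ H : Subgroup G, H.FiniteIndex ∧ IsCyclic H

/-- Relative hyperbolicity, in Yaman's dynamical formulation: `G` is non-elementary, `𝓗`
is the set of all conjugates of a finite collection of finitely generated proper subgroups,
and `G` admits a convergence action on a compact perfect metrizable space in which every
point is conical or bounded parabolic, and the parabolic points are exactly the points
fixed by the groups in `𝓗`. -/
def IsRelativelyHyperbolic (G : Type*) [Group G] (𝓗 : Set (Subgroup G)) : Prop :=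
  IsNonElementary G ∧
  (∃ S : Finset (Subgroup G), (∀ H ∈ S, Subgroup.FG H ∧ H ≠ ⊤) ∧
      𝓗 = {K | ∃ H ∈ S, ∃ g : G, K = Subgroup.map (MulAut.conj g).toMonoidHom H}) ∧
  ∃ (X : Type) (_ : TopologicalSpace X) (_ : MulAction G X),
    CompactSpace X ∧ T2Space X ∧ TopologicalSpace.MetrizableSpace X ∧
    (∀ x : X, Filter.NeBot (𝓝[≠] x)) ∧
    (∀ g : G, Continuous fun x : X => g • x) ∧
    IsConvergenceAction G X ∧
    (∀ x : X, IsConicalLimitPoint G X x ∨ IsBoundedParabolicPoint G X x) ∧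
    (∀ x : X, IsParabolicPoint G X x ↔ ∃ H ∈ 𝓗, ∀ h ∈ H, h • x = x)

/-- The standing hypotheses: `Ω = P(C)` is a properly convex domain; `Γ ≤ Aut(Ω)` is a
discrete non-elementary group acting convex cocompactly on `Ω`; `𝓗 ≠ {Γ}` is a collection of
subgroups of `Γ`, closed under conjugation by `Γ` and consisting of finitely many conjugacy
classes, each acting convex cocompactly on `Ω`; (i) the full orbital limit sets of the groups
in `𝓗` are pairwise disjoint; (ii) every nontrivial projective segment contained in
`Λ_Ω(Γ)` is contained in `Λ_Ω(H)` for some `H ∈ 𝓗`; (iii) each `H ∈ 𝓗` equals its own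
normalizer in `Γ`. -/
structure StandingHyps (d : ℕ) (C : Set (Vd d)) (Γ : Subgroup (PGLd d))
    (𝓗 : Set (Subgroup (PGLd d))) : Prop where
  cone : IsPCone C
  nonelem : IsNonElementary Γ
  ccG : ConvexCocompact C Γ
  hne : 𝓗 ≠ {Γ}
  hsub : ∀ H ∈ 𝓗, H ≤ Γ
  hconj : ∀ H ∈ 𝓗, ∀ g ∈ Γ, Subgroup.map (MulAut.conj g).toMonoidHom H ∈ 𝓗
  hfin : ∃ S : Finset (Subgroup (PGLd d)), ↑S ⊆ 𝓗 ∧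
    ∀ H ∈ 𝓗, ∃ H₀ ∈ S, ∃ g ∈ Γ, H = Subgroup.map (MulAut.conj g).toMonoidHom H₀
  ccH : ∀ H ∈ 𝓗, ConvexCocompact C H
  disj : 𝓗.Pairwise fun H H' => limitSet (projC C) H ∩ limitSet (projC C) H' = ∅
  seg : ∀ x y : PSpace d, x ∈ limitSet (projC C) Γ → y ∈ limitSet (projC C) Γ → x ≠ y →
    projSeg C x y ⊆ limitSet (projC C) Γ →
    ∃ H ∈ 𝓗, x ∈ limitSet (projC C) H ∧ y ∈ limitSet (projC C) H ∧
      projSeg C x y ⊆ limitSet (projC C) H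
  selfnorm : ∀ H ∈ 𝓗, ∀ g ∈ Γ, Subgroup.map (MulAut.conj g).toMonoidHom H = H → g ∈ H



section Aux

attribute [local instance] Matrix.normedAddCommGroup Matrix.normedSpace

variable {d : ℕ}

lemma continuous_projMk :
    Continuous (fun v : {v : Vd d // v ≠ 0} => Projectivization.mk ℝ v.1 v.2) :=
  continuous_quotient_mk'

lemma isOpen_projImage (W : Set (Vd d)) (hW : IsOpen W) :
    IsOpen {p : PSpace d | ∃ w, ∃ hw : w ≠ 0, w ∈ W ∧ p = Projectivization.mk ℝ w hw} := by
  have hqm : IsQuotientMap (fun v : {v : Vd d // v ≠ 0} => Projectivization.mk ℝ v.1 v.2) :=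
    isQuotientMap_quotient_mk'
  rw [← hqm.isOpen_preimage]
  have : (fun v : {v : Vd d // v ≠ 0} => Projectivization.mk ℝ v.1 v.2) ⁻¹'
      {p : PSpace d | ∃ w, ∃ hw : w ≠ 0, w ∈ W ∧ p = Projectivization.mk ℝ w hw}
      = ⋃ c : ℝˣ, (fun v : {v : Vd d // v ≠ 0} => (c : ℝ) • v.1) ⁻¹' W := by
    ext u
    simp only [Set.mem_preimage, Set.mem_setOf_eq, Set.mem_iUnion]
    constructor
    · rintro ⟨w, hw, hwW, hmk⟩
      obtain ⟨a, ha⟩ := (Projectivization.mk_eq_mk_iff ℝ u.1 w u.2 hw).1 hmk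
      refine ⟨a⁻¹, ?_⟩
      rw [← ha, Units.smul_def, smul_smul]
      simpa using hwW
    · rintro ⟨c, hc⟩
      refine ⟨(c : ℝ) • u.1, smul_ne_zero c.ne_zero u.2, hc, ?_⟩
      rw [Projectivization.mk_eq_mk_iff]
      exact ⟨c⁻¹, by rw [Units.smul_def, smul_smul]; simp⟩
  rw [this]
  exact isOpen_iUnion fun c => hW.preimage ((continuous_const_smul _).comp continuous_subtype_val)

lemma scalar_unit_mem_center (c : ℝˣ) :
    (Units.map (Matrix.scalar (Fin d)).toMonoidHom c : GLd d) ∈ Subgroup.center (GLd d) := by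
  rw [Subgroup.mem_center_iff]
  intro h
  refine Units.ext ?_
  have : (Units.map (Matrix.scalar (Fin d)).toMonoidHom c : GLd d).val
      = Matrix.scalar (Fin d) (c : ℝ) := rfl
  rw [Units.val_mul, Units.val_mul, this]
  exact (Matrix.scalar_commute (c : ℝ) (fun r => Commute.all _ _) (h : Matrix (Fin d) (Fin d) ℝ)).symm

lemma mk_scalar_mul (c : ℝˣ) (u : GLd d) :
    (QuotientGroup.mk (Units.map (Matrix.scalar (Fin d)).toMonoidHom c * u) : PGLd d)
      = QuotientGroup.mk u := by
  rw [QuotientGroup.mk_mul]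
  have : (QuotientGroup.mk (Units.map (Matrix.scalar (Fin d)).toMonoidHom c : GLd d) : PGLd d)
      = 1 := (QuotientGroup.eq_one_iff _).2 (scalar_unit_mem_center c)
  rw [this, one_mul]

lemma pgl_smul_mk (u : GLd d) (w : Vd d) (hw : w ≠ 0)
    (h' : (u : Matrix (Fin d) (Fin d) ℝ).mulVec w ≠ 0) :
    (QuotientGroup.mk u : PGLd d) • Projectivization.mk ℝ w hw
      = Projectivization.mk ℝ ((u : Matrix (Fin d) (Fin d) ℝ).mulVec w) h' := by
  show (pglPermHom d (QuotientGroup.mk u)) (Projectivization.mk ℝ w hw) = _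
  have : pglPermHom d (QuotientGroup.mk u) = projPermHom d u := by
    simp [pglPermHom]
  rw [this]
  show projMap u (Projectivization.mk ℝ w hw) = _
  rw [projMap_mk]
  rfl

set_option maxHeartbeats 1600000 in
/-- Every divergent sequence in `PGL(d,ℝ)` has a subsequence admitting
nonzero attracting and repelling subspaces `E₊`, `E₋` with `dim E₊ + dim E₋ = d`. -/
theorem divergent_has_attracting_repelling_subsequence
    {d : ℕ} (hd : 2 ≤ d) (g : ℕ → PGLd d) (hdiv : IsDivergent g) :
    ∃ φ : ℕ → ℕ, StrictMono φ ∧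
      ∃ Ep Em : Submodule ℝ (Vd d), Ep ≠ ⊥ ∧ Em ≠ ⊥ ∧
        Module.finrank ℝ Ep + Module.finrank ℝ Em = d ∧
        AttractingRepelling (fun n => g (φ n)) Ep Em := by
  classical
  haveI : Nonempty (Fin d) := ⟨⟨0, by omega⟩⟩
  choose γ hγ using fun n => QuotientGroup.mk_surjective (g n)
  have hnz : ∀ n, ((γ n : GLd d) : Matrix (Fin d) (Fin d) ℝ) ≠ 0 := by
    intro n h0
    have h1 : ((γ n * (γ n)⁻¹ : GLd d) : Matrix (Fin d) (Fin d) ℝ)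
        = (1 : Matrix (Fin d) (Fin d) ℝ) := by simp
    rw [Units.val_mul, h0, zero_mul] at h1
    have h2 := congrFun (congrFun h1 ⟨0, by omega⟩) ⟨0, by omega⟩
    simp [Matrix.one_apply_eq] at h2
  set A : ℕ → Matrix (Fin d) (Fin d) ℝ :=
    fun n => ‖((γ n : GLd d) : Matrix (Fin d) (Fin d) ℝ)‖⁻¹ •
      ((γ n : GLd d) : Matrix (Fin d) (Fin d) ℝ) with hA
  have hA1 : ∀ n, A n ∈ Metric.sphere (0 : Matrix (Fin d) (Fin d) ℝ) 1 := by
    intro n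
    rw [mem_sphere_zero_iff_norm, hA]
    rw [norm_smul, norm_inv, norm_norm]
    exact inv_mul_cancel₀ (norm_ne_zero_iff.2 (hnz n))
  obtain ⟨T, hTmem, φ, hφ, hTend⟩ :=
    (isCompact_sphere (0 : Matrix (Fin d) (Fin d) ℝ) 1).tendsto_subseq hA1
  have hT1 : ‖T‖ = 1 := mem_sphere_zero_iff_norm.1 hTmem
  have hT0 : T ≠ 0 := by intro h; rw [h, norm_zero] at hT1; exact zero_ne_one hT1
  -- unit lifts of `g n` whose matrix is `A n`
  have hulift : ∀ n, ∃ u : GLd d, ((u : Matrix (Fin d) (Fin d) ℝ) = A n) ∧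
      (QuotientGroup.mk u : PGLd d) = g n := by
    intro n
    set c : ℝˣ := Units.mk0 ‖((γ n : GLd d) : Matrix (Fin d) (Fin d) ℝ)‖⁻¹
      (inv_ne_zero (norm_ne_zero_iff.2 (hnz n))) with hc
    refine ⟨Units.map (Matrix.scalar (Fin d)).toMonoidHom c * γ n, ?_, ?_⟩
    · rw [Units.val_mul]
      show Matrix.scalar (Fin d) (c : ℝ) * _ = _
      rw [Matrix.scalar_apply, ← Matrix.smul_eq_diagonal_mul]
      rfl
    · rw [mk_scalar_mul, hγ]
  choose u hval hmk using hulift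
  -- divergence forces the limit `T` to be singular
  have hdet : ¬ IsUnit T.det := by
    intro hu
    have hopen : IsOpen {M : Matrix (Fin d) (Fin d) ℝ | M.det ≠ 0} :=
      isOpen_ne.preimage continuous_id.matrix_det
    obtain ⟨ε, hε, hball⟩ := Metric.isOpen_iff.1 hopen T hu.ne_zero
    have hcb : IsCompact (Metric.closedBall T (ε / 2)) := isCompact_closedBall T (ε / 2)
    haveI : CompactSpace (Metric.closedBall T (ε / 2)) := isCompact_iff_compactSpace.1 hcb
    have hdet' : ∀ M : Metric.closedBall T (ε / 2), IsUnit (M.1.det) := by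
      intro M
      refine isUnit_iff_ne_zero.2 (hball ?_)
      have := Metric.mem_closedBall.1 M.2
      exact Metric.mem_ball.2 (lt_of_le_of_lt this (by linarith))
    set h : Metric.closedBall T (ε / 2) → GLd d :=
      fun M => Matrix.GeneralLinearGroup.mk'' M.1 (hdet' M) with hh
    have hcont : Continuous h := by
      refine Units.continuous_iff.2 ⟨continuous_subtype_val, ?_⟩
      show Continuous fun M : Metric.closedBall T (ε / 2) => (M.1)⁻¹
      refine continuous_iff_continuousAt.2 fun M => ?_
      have h1 := NormedRing.inverse_continuousAt (hdet' M).unit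
      rw [(hdet' M).unit_spec] at h1
      exact (continuousAt_matrix_inv M.1 h1).comp continuousAt_subtype_val
    set K : Set (PGLd d) := Set.range fun M => (QuotientGroup.mk (h M) : PGLd d) with hK
    have hKc : IsCompact K := isCompact_range (continuous_quotient_mk'.comp hcont)
    have hev : ∀ᶠ n in atTop, A (φ n) ∈ Metric.closedBall T (ε / 2) :=
      hTend.eventually (Metric.closedBall_mem_nhds T (by linarith))
    obtain ⟨N, hN⟩ := eventually_atTop.1 hev
    have himg : ∀ n ≥ N, g (φ n) ∈ K := by
      intro n hn
      refine ⟨⟨A (φ n), hN n hn⟩, ?_⟩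
      rw [← hmk (φ n)]
      exact congrArg QuotientGroup.mk (Units.ext (hval (φ n)).symm)
    have hinf : {n | g n ∈ K}.Infinite := by
      refine Set.Infinite.mono ?_ ((Set.Ici_infinite N).image
        (Set.injOn_of_injective hφ.injective))
      rintro m ⟨n, hn, rfl⟩
      exact himg n hn
    exact hinf (hdiv K hKc)
  have hdet0 : T.det = 0 := by
    by_contra h0
    exact hdet (isUnit_iff_ne_zero.2 h0)
  set Tlin : Vd d →ₗ[ℝ] Vd d := Matrix.mulVecLin T with hTlin
  obtain ⟨v₀, hv₀ne, hv₀⟩ := Matrix.exists_mulVec_eq_zero_iff.2 hdet0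
  have hEm : LinearMap.ker Tlin ≠ ⊥ :=
    Submodule.ne_bot_iff _ |>.2 ⟨v₀, LinearMap.mem_ker.2 (by simpa [hTlin] using hv₀), hv₀ne⟩
  have hEp : LinearMap.range Tlin ≠ ⊥ := by
    have hw : ∃ w, T.mulVec w ≠ 0 := by
      by_contra hall
      push_neg at hall
      apply hT0
      ext i j
      have h2 := hall (Pi.single j 1)
      rw [Matrix.mulVec_single] at h2
      have := congrFun h2 i
      simpa using this
    obtain ⟨w, hw⟩ := hw
    exact Submodule.ne_bot_iff _ |>.2 ⟨T.mulVec w, ⟨w, rfl⟩, hw⟩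
  have hrank : Module.finrank ℝ (LinearMap.range Tlin) +
      Module.finrank ℝ (LinearMap.ker Tlin) = d := by
    rw [LinearMap.finrank_range_add_finrank_ker Tlin]
    exact Module.finrank_fin_fun ℝ
  refine ⟨φ, hφ, LinearMap.range Tlin, LinearMap.ker Tlin, hEp, hEm, hrank, hEp, hEm, ?_⟩
  intro Kc hKc hKm U hU hUp
  -- local data at each point of `Kc`
  have hx : ∀ x : PSpace d, x ∈ Kc → ∃ (ε : ℝ) (W : Set (Vd d)), 0 < ε ∧ IsOpen W ∧
      (∃ w, ∃ hw : w ≠ 0, w ∈ W ∧ x = Projectivization.mk ℝ w hw) ∧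
      ∀ M ∈ Metric.ball T ε, ∀ w ∈ W,
        ∃ h' : M.mulVec w ≠ 0, Projectivization.mk ℝ (M.mulVec w) h' ∈ U := by
    intro x hxK
    have hvne := x.rep_nonzero
    have hTv : T.mulVec x.rep ≠ 0 := by
      intro h0
      exact hKm hxK ⟨x.rep, hvne, LinearMap.mem_ker.2 (by simpa [hTlin] using h0),
        x.mk_rep.symm⟩
    have hF : Continuous fun p : Matrix (Fin d) (Fin d) ℝ × Vd d => p.1.mulVec p.2 :=
      continuous_fst.matrix_mulVec continuous_snd
    have hSopen : IsOpen {p : Matrix (Fin d) (Fin d) ℝ × Vd d | p.1.mulVec p.2 ≠ 0} :=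
      isOpen_ne.preimage hF
    have hΦ : Continuous fun p : {p : Matrix (Fin d) (Fin d) ℝ × Vd d | p.1.mulVec p.2 ≠ 0} =>
        Projectivization.mk ℝ (p.1.1.mulVec p.1.2) p.2 := by
      have h1 : Continuous fun p : {p : Matrix (Fin d) (Fin d) ℝ × Vd d | p.1.mulVec p.2 ≠ 0} =>
          (⟨p.1.1.mulVec p.1.2, p.2⟩ : {v : Vd d // v ≠ 0}) :=
        Continuous.subtype_mk (hF.comp continuous_subtype_val) (fun p => p.2)
      exact continuous_projMk.comp h1
    have hOeq : Subtype.val ''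
        ((fun p : {p : Matrix (Fin d) (Fin d) ℝ × Vd d | p.1.mulVec p.2 ≠ 0} =>
          Projectivization.mk ℝ (p.1.1.mulVec p.1.2) p.2) ⁻¹' U)
        = {p : Matrix (Fin d) (Fin d) ℝ × Vd d |
            ∃ h' : p.1.mulVec p.2 ≠ 0, Projectivization.mk ℝ (p.1.mulVec p.2) h' ∈ U} := by
      ext p
      constructor
      · rintro ⟨⟨q, hq⟩, hqU, rfl⟩
        exact ⟨hq, hqU⟩
      · rintro ⟨h', hU'⟩
        exact ⟨⟨p, h'⟩, hU', rfl⟩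
    have hO : IsOpen {p : Matrix (Fin d) (Fin d) ℝ × Vd d |
        ∃ h' : p.1.mulVec p.2 ≠ 0, Projectivization.mk ℝ (p.1.mulVec p.2) h' ∈ U} := by
      rw [← hOeq]
      exact hSopen.isOpenMap_subtype_val _ (hU.preimage hΦ)
    have hTvO : (T, x.rep) ∈ {p : Matrix (Fin d) (Fin d) ℝ × Vd d |
        ∃ h' : p.1.mulVec p.2 ≠ 0, Projectivization.mk ℝ (p.1.mulVec p.2) h' ∈ U} :=
      ⟨hTv, hUp ⟨T.mulVec x.rep, hTv, ⟨x.rep, rfl⟩, rfl⟩⟩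
    obtain ⟨P1, hP1, P2, hP2, hPsub⟩ := mem_nhds_prod_iff.1 (hO.mem_nhds hTvO)
    obtain ⟨ε, hε, hball⟩ := Metric.mem_nhds_iff.1 hP1
    obtain ⟨W0, hW0sub, hW0open, hvW0⟩ := mem_nhds_iff.1 hP2
    refine ⟨ε, W0 ∩ {w | w ≠ 0}, hε, hW0open.inter isOpen_ne,
      ⟨x.rep, hvne, ⟨hvW0, hvne⟩, x.mk_rep.symm⟩, ?_⟩
    intro M hM w hw
    have hmem : (M, w) ∈ P1 ×ˢ P2 := Set.mk_mem_prod (hball hM) (hW0sub hw.1)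
    exact hPsub hmem
  choose! εf Wf hεf hWopen hxmem hprop using hx
  obtain ⟨t, htK, htcov⟩ := hKc.elim_nhds_subcover
    (fun x => {p : PSpace d | ∃ w, ∃ hw : w ≠ 0, w ∈ Wf x ∧ p = Projectivization.mk ℝ w hw})
    (fun x hxK => (isOpen_projImage _ (hWopen x hxK)).mem_nhds (hxmem x hxK))
  have hev : ∀ᶠ n in atTop, ∀ x ∈ (t : Set (PSpace d)), A (φ n) ∈ Metric.ball T (εf x) := by
    rw [eventually_all_finite t.finite_toSet]
    intro x hxt
    exact hTend.eventually (Metric.ball_mem_nhds T (hεf x (htK x hxt)))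
  filter_upwards [hev] with n hn x hxK
  obtain ⟨x₀, hx₀t, hxU⟩ := Set.mem_iUnion₂.1 (htcov hxK)
  obtain ⟨w, hw, hwW, rfl⟩ := hxU
  have hMball : ((u (φ n) : GLd d) : Matrix (Fin d) (Fin d) ℝ) ∈ Metric.ball T (εf x₀) := by
    rw [hval]; exact hn x₀ (Finset.mem_coe.2 hx₀t)
  obtain ⟨h', hin⟩ := hprop x₀ (htK x₀ hx₀t) _ hMball w hwW
  show g (φ n) • Projectivization.mk ℝ w hw ∈ U
  rw [← hmk (φ n), pgl_smul_mk (u (φ n)) w hw h']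
  exact hin

end Aux

end ConvexProjective
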